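/- arXiv:2001.03443 — 4 statements merged into one kernel-verified Lean document; each statement's English description precedes it below -/
import Mathlib

section
/- Let f : R^n → R, let Q ⊆ R^n be convex closed, and suppose ψ(·, x) is a convex function with ψ(x, x) = 0 satisfying the (δ, L)-model inequalities (with μ = 0): f(x) + ψ(y, x) − δ₁ ≤ f(y) ≤ f(x) + ψ(y, x) + (L/2)‖y − x‖² + δ₂ for all x, y ∈ Q. If x_{k+1} = argmin_{x ∈ Q} [ψ(x, x_k) + (L/2)‖x − x_k‖²], then for all x ∈ Q: f(x_{k+1}) ≤ f(x) + (L/2)‖x − x_k‖² − (L/2)‖x − x_{k+1}‖² + δ₁ + δ₂. -/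
/-!
The prox objective `y ↦ ψ y xk + (L / 2) * ‖y - xk‖ ^ 2` is `L`-strongly convex, so its minimiser
`xk1` beats every `x ∈ Q` by at least `(L / 2) * ‖x - xk1‖ ^ 2` (three-point inequality). The upper
model bounds `f xk1` by the objective at `xk1` plus `δ₂`, and the lower model bounds `ψ x xk` by
`f x - f xk + δ₁`.
-/

open Set Filter Topology

section

variable {E : Type*} [NormedAddCommGroup E]

theorem StrongConvexOn.add_sq_norm_sub_le_of_isMinOn [NormedSpace ℝ E] {s : Set E} {m : ℝ}
    {f : E → ℝ} (hf : StrongConvexOn s m f) {x₀ x : E} (hmin : IsMinOn f s x₀) (hx₀ : x₀ ∈ s)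
    (hx : x ∈ s) : f x₀ + m / 2 * ‖x - x₀‖ ^ 2 ≤ f x := by
  set K := m / 2 * ‖x - x₀‖ ^ 2
  -- Minimality at `x₀` against the point `t • x + (1 - t) • x₀`, divided by `t`, then `t → 0⁺`.
  have hsegment : ∀ t ∈ Ioc (0 : ℝ) 1, f x₀ + (1 - t) * K ≤ f x := by
    rintro t ⟨ht₀, ht₁⟩
    have hmid := hf.2 hx hx₀ ht₀.le (sub_nonneg.2 ht₁) (add_sub_cancel t 1)
    have hmin_mid := hmin (hf.1 hx hx₀ ht₀.le (sub_nonneg.2 ht₁) (add_sub_cancel t 1))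
    rw [smul_eq_mul, smul_eq_mul] at hmid
    refine le_of_mul_le_mul_left ?_ ht₀
    linear_combination hmin_mid.trans hmid
  have hlim : Tendsto (fun t : ℝ => f x₀ + (1 - t) * K) (𝓝[>] 0) (𝓝 (f x₀ + K)) := by
    refine Tendsto.mono_left ?_ nhdsWithin_le_nhds
    exact (by fun_prop : Continuous fun t : ℝ => f x₀ + (1 - t) * K).tendsto' 0 _ (by simp)
  exact le_of_tendsto hlim (eventually_of_mem (Ioc_mem_nhdsGT one_pos) hsegment)

variable [InnerProductSpace ℝ E]

theorem strongConvexOn_sq_norm_sub {s : Set E} (hs : Convex ℝ s) (a : E) (m : ℝ) :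
    StrongConvexOn s m fun y => m / 2 * ‖y - a‖ ^ 2 := by
  rw [strongConvexOn_iff_convex]
  have hquad : (fun y => m / 2 * ‖y - a‖ ^ 2 - m / 2 * ‖y‖ ^ 2)
      = fun y => ((-m) • innerₛₗ ℝ a) y + m / 2 * ‖a‖ ^ 2 := by
    ext y
    simp only [norm_sub_sq_real, real_inner_comm, neg_smul, LinearMap.neg_apply,
      LinearMap.smul_apply, innerₛₗ_apply_apply, smul_eq_mul]
    ring
  rw [hquad]
  exact (LinearMap.convexOn _ hs).add_const _

theorem ConvexOn.strongConvexOn_add_sq_norm_sub {s : Set E} {φ : E → ℝ} (hφ : ConvexOn ℝ s φ)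
    (a : E) (m : ℝ) :
    StrongConvexOn s m fun y => φ y + m / 2 * ‖y - a‖ ^ 2 := by
  have h := hφ.uniformConvexOn_zero.add (strongConvexOn_sq_norm_sub hφ.1 a m)
  rwa [zero_add] at h

end

theorem gm_one_step_general (n : ℕ) (f : EuclideanSpace ℝ (Fin n) → ℝ)
    (Q : Set (EuclideanSpace ℝ (Fin n)))
    (ψ : EuclideanSpace ℝ (Fin n) → EuclideanSpace ℝ (Fin n) → ℝ)
    (δ₁ δ₂ L : ℝ)
    (hψconv : ∀ x ∈ Q, ConvexOn ℝ Q (fun y => ψ y x))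
    (hlow : ∀ x ∈ Q, ∀ y ∈ Q, f x + ψ y x - δ₁ ≤ f y)
    (hup : ∀ x ∈ Q, ∀ y ∈ Q, f y ≤ f x + ψ y x + (L / 2) * ‖y - x‖ ^ 2 + δ₂)
    (xk xk1 : EuclideanSpace ℝ (Fin n)) (hxk : xk ∈ Q) (hxk1 : xk1 ∈ Q)
    (hargmin : ∀ x ∈ Q,
      ψ xk1 xk + (L / 2) * ‖xk1 - xk‖ ^ 2 ≤ ψ x xk + (L / 2) * ‖x - xk‖ ^ 2) :
    ∀ x ∈ Q,
      f xk1 ≤ f x + (L / 2) * ‖x - xk‖ ^ 2 - (L / 2) * ‖x - xk1‖ ^ 2 + δ₁ + δ₂ := by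
  intro x hx
  have hprox := (hψconv xk hxk).strongConvexOn_add_sq_norm_sub xk L
  have hthree := hprox.add_sq_norm_sub_le_of_isMinOn (isMinOn_iff.2 hargmin) hxk1 hx
  have hupper := hup xk hxk xk1 hxk1
  have hlower := hlow xk hxk x hx
  linarith

theorem gm_one_step (n : ℕ) (f : EuclideanSpace ℝ (Fin n) → ℝ)
    (Q : Set (EuclideanSpace ℝ (Fin n))) (hQconv : Convex ℝ Q) (hQclosed : IsClosed Q)
    (ψ : EuclideanSpace ℝ (Fin n) → EuclideanSpace ℝ (Fin n) → ℝ)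
    (δ₁ δ₂ L : ℝ) (hL : 0 < L)
    (hψconv : ∀ x ∈ Q, ConvexOn ℝ Q (fun y => ψ y x))
    (hψ0 : ∀ x ∈ Q, ψ x x = 0)
    (hlow : ∀ x ∈ Q, ∀ y ∈ Q, f x + ψ y x - δ₁ ≤ f y)
    (hup : ∀ x ∈ Q, ∀ y ∈ Q, f y ≤ f x + ψ y x + (L / 2) * ‖y - x‖ ^ 2 + δ₂)
    (xk xk1 : EuclideanSpace ℝ (Fin n)) (hxk : xk ∈ Q) (hxk1 : xk1 ∈ Q)
    (hargmin : ∀ x ∈ Q,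
      ψ xk1 xk + (L / 2) * ‖xk1 - xk‖ ^ 2 ≤ ψ x xk + (L / 2) * ‖x - xk‖ ^ 2) :
    ∀ x ∈ Q,
      f xk1 ≤ f x + (L / 2) * ‖x - xk‖ ^ 2 - (L / 2) * ‖x - xk1‖ ^ 2 + δ₁ + δ₂ :=
  gm_one_step_general n f Q ψ δ₁ δ₂ L hψconv hlow hup xk xk1 hxk hxk1 hargmin
end

section
/- Let α_{k+1} be the largest root of (A_k + α)(1 + A_k μ) = L α² with A_0 = 0, A_{k+1} = A_k + α_{k+1}, L > 0, μ = 0. Then A_N ≥ N²/(4L) for all N ≥ 1. -/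
theorem fgm_coefficient_growth_mu_zero (L : ℝ) (hL : 0 < L)
    (α A : ℕ → ℝ) (hA0 : A 0 = 0)
    (hα : ∀ k, α (k + 1) = (1 + Real.sqrt (1 + 4 * L * A k)) / (2 * L))
    (hroot : ∀ k, A k + α (k + 1) = L * α (k + 1) ^ 2)
    (hArec : ∀ k, A (k + 1) = A k + α (k + 1)) :
    ∀ N : ℕ, 1 ≤ N → A N ≥ (N : ℝ) ^ 2 / (4 * L) := by
  have key : ∀ N : ℕ, A N ≥ (N : ℝ) ^ 2 / (4 * L) := by
    intro N
    induction N with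
    | zero => simp [hA0]
    | succ k ih =>
      have hsq : Real.sqrt (1 + 4 * L * A k) ≥ (k : ℝ) := by
        have h1 : ((k : ℝ)) ^ 2 ≤ 1 + 4 * L * A k := by
          have : (k : ℝ) ^ 2 / (4 * L) * (4 * L) ≤ A k * (4 * L) := by
            apply mul_le_mul_of_nonneg_right ih (by positivity)
          rw [div_mul_cancel₀] at this
          · linarith
          · positivity
        calc (k : ℝ) = Real.sqrt ((k : ℝ) ^ 2) := by
              rw [Real.sqrt_sq (Nat.cast_nonneg k)]
          _ ≤ Real.sqrt (1 + 4 * L * A k) := Real.sqrt_le_sqrt h1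
      have hαge : α (k + 1) ≥ ((k : ℝ) + 1) / (2 * L) := by
        rw [hα k, ge_iff_le, div_le_div_iff₀ (by positivity) (by positivity)]
        nlinarith
      have hA1 : A (k + 1) = L * α (k + 1) ^ 2 := by
        rw [hArec k]; exact hroot k
      have hαnn : (0:ℝ) ≤ ((k : ℝ) + 1) / (2 * L) := by positivity
      have : L * (((k : ℝ) + 1) / (2 * L)) ^ 2 ≤ L * α (k + 1) ^ 2 := by
        apply mul_le_mul_of_nonneg_left _ hL.le
        exact pow_le_pow_left₀ hαnn hαge 2
      have heq : L * (((k : ℝ) + 1) / (2 * L)) ^ 2 = ((k : ℝ) + 1) ^ 2 / (4 * L) := by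
        field_simp; ring
      rw [hA1]
      push_cast
      linarith [heq ▸ this]
  intro N _
  exact key N
end

section
/- Under the assumptions and iteration of the fast gradient method in model generality (Lemma 3 per-step estimate with errors δ₁^k(·,·), δ₂^k, A_0 = 0, u_0 = x_0), after N steps: f(x_N) − f(x_*) ≤ R²/(2A_N) + (1/A_N) Σ_{k=0}^{N−1} A_k δ₁^k(x_k, y_{k+1}) + (1/A_N) Σ_{k=0}^{N−1} α_{k+1} δ₁^k(x_*, y_{k+1}) + (1/A_N) Σ_{k=0}^{N−1} A_{k+1} δ₂^k, where R = ‖x_* − x_0‖. -/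
/-! The potential `Φ k = A k f(x k) + ((1 + A k μ)/2) ‖x_* − u k‖²` grows by at most the right-hand
side of the per-step estimate; telescoping from `Φ 0 = ‖x_* − x 0‖²/2` (as `A 0 = 0`, `u 0 = x 0`)
and using `∑ α (k+1) = A N` bounds `A N f(x N) ≤ Φ N` by `A N f(x_*)` plus the accumulated errors.
Dividing by `A N > 0` gives the rate. -/

open Finset

theorem sub_le_sum_of_forall_succ_sub_le {G : Type*} [AddCommGroup G] [PartialOrder G]
    [IsOrderedAddMonoid G] {Φ c : ℕ → G} {N : ℕ}
    (h : ∀ k < N, Φ (k + 1) - Φ k ≤ c k) : Φ N - Φ 0 ≤ ∑ k ∈ range N, c k := by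
  rw [← sum_range_sub]
  exact sum_le_sum fun k hk => h k (mem_range.mp hk)

theorem sum_range_increments_eq_sub {G : Type*} [AddCommGroup G] {A α : ℕ → G}
    (hA : ∀ k, A (k + 1) = A k + α (k + 1)) (N : ℕ) : ∑ k ∈ range N, α (k + 1) = A N - A 0 := by
  rw [← sum_range_sub]
  exact sum_congr rfl fun k _ => by rw [hA k, add_sub_cancel_left]

theorem fgm_telescoped (n : ℕ) (f : EuclideanSpace ℝ (Fin n) → ℝ)
    (δ₁ : ℕ → EuclideanSpace ℝ (Fin n) → EuclideanSpace ℝ (Fin n) → ℝ) (δ₂ : ℕ → ℝ)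
    (μ : ℝ) (hμ : 0 ≤ μ)
    (α A : ℕ → ℝ) (hA0 : A 0 = 0)
    (hArec : ∀ k, A (k + 1) = A k + α (k + 1))
    (x u y : ℕ → EuclideanSpace ℝ (Fin n)) (hu0 : u 0 = x 0)
    (xstar : EuclideanSpace ℝ (Fin n))
    (N : ℕ) (hANpos : 0 < A N)
    (hstep : ∀ k < N,
      A (k + 1) * f (x (k + 1)) - A k * f (x k)
          + ((1 + A (k + 1) * μ) / 2) * ‖xstar - u (k + 1)‖ ^ 2
          - ((1 + A k * μ) / 2) * ‖xstar - u k‖ ^ 2 ≤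
        α (k + 1) * f xstar + A k * δ₁ k (x k) (y (k + 1))
          + α (k + 1) * δ₁ k xstar (y (k + 1)) + A (k + 1) * δ₂ k) :
    f (x N) - f xstar ≤
      ‖xstar - x 0‖ ^ 2 / (2 * A N)
        + (1 / A N) * ∑ k ∈ Finset.range N, A k * δ₁ k (x k) (y (k + 1))
        + (1 / A N) * ∑ k ∈ Finset.range N, α (k + 1) * δ₁ k xstar (y (k + 1))
        + (1 / A N) * ∑ k ∈ Finset.range N, A (k + 1) * δ₂ k := by
  set Φ : ℕ → ℝ := fun k => A k * f (x k) + ((1 + A k * μ) / 2) * ‖xstar - u k‖ ^ 2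
  have htel := sub_le_sum_of_forall_succ_sub_le (Φ := Φ) fun k hk =>
    (le_of_eq (by simp only [Φ]; ring)).trans (hstep k hk)
  rw [sum_add_distrib, sum_add_distrib, sum_add_distrib, ← sum_mul,
    sum_range_increments_eq_sub hArec, hA0, sub_zero] at htel
  have hΦ0 : Φ 0 = ‖xstar - x 0‖ ^ 2 / 2 := by simp only [Φ, hA0, hu0]; ring
  have hΦN : A N * f (x N) ≤ Φ N := le_add_of_nonneg_right (by positivity)
  have hbound : f (x N) - f xstar ≤ (‖xstar - x 0‖ ^ 2 / 2
      + ∑ k ∈ range N, A k * δ₁ k (x k) (y (k + 1))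
      + ∑ k ∈ range N, α (k + 1) * δ₁ k xstar (y (k + 1))
      + ∑ k ∈ range N, A (k + 1) * δ₂ k) / A N := by
    rw [le_div_iff₀ hANpos]
    linarith
  calc f (x N) - f xstar ≤ _ := hbound
    _ = _ := by ring
end

section
/- Let f₁, …, f_m : R^n → R be convex with L-Lipschitz gradients (as two-sided quadratic bounds), F(x) = max_i f_i(x), and for vectors g₁, …, g_m ∈ R^n define ψ(y, x) = max_i {f_i(x) + ⟨g_i, y − x⟩} − F(x). Then for all x, y: F(y) ≤ F(x) + ψ(y, x) + (1/(2L)) max_i ‖∇f_i(x) − g_i‖² + L‖y − x‖². -/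
open scoped RealInnerProductSpace

theorem max_smooth_upper_model (n m : ℕ) [NeZero m]
    (f : Fin m → EuclideanSpace ℝ (Fin n) → ℝ)
    (gradf : Fin m → EuclideanSpace ℝ (Fin n) → EuclideanSpace ℝ (Fin n))
    (L : ℝ) (hL : 0 < L)
    (hsmooth : ∀ i, ∀ x y,
      f i x + ⟪gradf i x, y - x⟫ ≤ f i y ∧
      f i y ≤ f i x + ⟪gradf i x, y - x⟫ + (L / 2) * ‖y - x‖ ^ 2)
    (g : Fin m → EuclideanSpace ℝ (Fin n)) :
    ∀ x y : EuclideanSpace ℝ (Fin n),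
      Finset.univ.sup' Finset.univ_nonempty (fun i => f i y) ≤
        Finset.univ.sup' Finset.univ_nonempty (fun i => f i x)
        + (Finset.univ.sup' Finset.univ_nonempty (fun i => f i x + ⟪g i, y - x⟫)
            - Finset.univ.sup' Finset.univ_nonempty (fun i => f i x))
        + (1 / (2 * L)) *
            Finset.univ.sup' Finset.univ_nonempty (fun i => ‖gradf i x - g i‖ ^ 2)
        + L * ‖y - x‖ ^ 2 := by
  intro x y
  have key : ∀ i, f i y ≤ (f i x + ⟪g i, y - x⟫)
      + (1 / (2 * L)) * ‖gradf i x - g i‖ ^ 2 + L * ‖y - x‖ ^ 2 := by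
    intro i
    have h2 := (hsmooth i x y).2
    set a := ‖gradf i x - g i‖ with ha
    set b := ‖y - x‖ with hb
    have hcs : ⟪gradf i x - g i, y - x⟫ ≤ (1 / (2 * L)) * a ^ 2 + (L / 2) * b ^ 2 := by
      have h1 : ⟪gradf i x - g i, y - x⟫ ≤ a * b :=
        real_inner_le_norm _ _
      have hsq : (1 / (2 * L)) * a ^ 2 + (L / 2) * b ^ 2 - a * b
          = (1 / (2 * L)) * (a - L * b) ^ 2 := by
        field_simp
        ring
      have hnn : 0 ≤ 1 / (2 * L) * (a - L * b) ^ 2 := by positivity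
      linarith
    have hsplit : ⟪gradf i x, y - x⟫ = ⟪g i, y - x⟫ + ⟪gradf i x - g i, y - x⟫ := by
      rw [inner_sub_left]; ring
    rw [hsplit] at h2
    linarith
  apply Finset.sup'_le
  intro i _
  have h1 : f i x + ⟪g i, y - x⟫ ≤
      Finset.univ.sup' Finset.univ_nonempty (fun i => f i x + ⟪g i, y - x⟫) :=
    Finset.le_sup' (fun j => f j x + ⟪g j, y - x⟫) (Finset.mem_univ i)
  have h2 : ‖gradf i x - g i‖ ^ 2 ≤
      Finset.univ.sup' Finset.univ_nonempty (fun i => ‖gradf i x - g i‖ ^ 2) :=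
    Finset.le_sup' (fun j => ‖gradf j x - g j‖ ^ 2) (Finset.mem_univ i)
  have hpos : (0:ℝ) ≤ 1 / (2 * L) := by positivity
  have := mul_le_mul_of_nonneg_left h2 hpos
  linarith [key i]
end
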